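/- Let P be a row-stochastic S×S matrix depending on α via P(α)_{s,s'} = ∑_a π_{θ_α}(a|s)·P(s'|s,a), where π_{θ_α}(a|s) = ∑_{m=1}^M softmax(θ+αu)(m)·K_m(s,a) for fixed stochastic matrices K_m and a unit vector u ∈ ℝ^M. Then for any x ∈ ℝ^S, ‖(d/dα P(α))|_{α=0} · x‖_∞ ≤ 2·‖u‖₂·‖x‖_∞. -/

import Mathlib

/-! The derivative of the transition matrix is `P'(s, s') = ∑ₐ π'(a|s) P(s'|s,a)`, so
`|(P' x)(s)| ≤ (∑ₐ |π'(a|s)|) ‖x‖_∞`. Differentiating the softmax along `u` gives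
`d/dα softmax(θ + αu)(m) = p_m (u_m - ⟨p, u⟩)` with `p = softmax θ`, whose `ℓ¹` norm is at most
`2 max_m |u_m| ≤ 2‖u‖₂`, and mixing with the stochastic rows `K_m(s, ·)` does not increase
the `ℓ¹` norm. -/

noncomputable def softmax {M : ℕ} (θ : Fin M → ℝ) (m : Fin M) : ℝ :=
  Real.exp (θ m) / ∑ m', Real.exp (θ m')

open Finset

section Stochastic

variable {ι κ : Type*} [Fintype ι] [Fintype κ]

lemma abs_sum_mul_le_sum_abs_mul {w f : ι → ℝ} {C : ℝ} (hf : ∀ i, |f i| ≤ C) :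
    |∑ i, w i * f i| ≤ (∑ i, |w i|) * C :=
  calc |∑ i, w i * f i| ≤ ∑ i, |w i| * |f i| := by
        simpa only [abs_mul] using abs_sum_le_sum_abs (fun i => w i * f i) univ
    _ ≤ ∑ i, |w i| * C := sum_le_sum fun i _ => mul_le_mul_of_nonneg_left (hf i) (abs_nonneg _)
    _ = (∑ i, |w i|) * C := (sum_mul _ _ _).symm

lemma abs_sum_mul_le_of_stochastic {p f : ι → ℝ} {C : ℝ} (hp0 : ∀ i, 0 ≤ p i)
    (hp1 : ∑ i, p i = 1) (hf : ∀ i, |f i| ≤ C) : |∑ i, p i * f i| ≤ C := by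
  simpa [abs_of_nonneg (hp0 _), hp1] using abs_sum_mul_le_sum_abs_mul (w := p) hf

lemma sum_abs_sum_mul_le_of_stochastic (K : ι → κ → ℝ)
    (hK : ∀ i, (∀ j, 0 ≤ K i j) ∧ ∑ j, K i j = 1) (c : ι → ℝ) :
    ∑ j, |∑ i, c i * K i j| ≤ ∑ i, |c i| :=
  calc ∑ j, |∑ i, c i * K i j| ≤ ∑ j, ∑ i, |c i| * K i j :=
        sum_le_sum fun j _ => (abs_sum_le_sum_abs _ _).trans_eq <|
          sum_congr rfl fun i _ => by rw [abs_mul, abs_of_nonneg ((hK i).1 j)]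
    _ = ∑ i, |c i| := by
        rw [sum_comm]
        exact sum_congr rfl fun i _ => by rw [← mul_sum, (hK i).2, mul_one]

end Stochastic

lemma abs_le_sqrt_sum_sq {ι : Type*} [Fintype ι] (u : ι → ℝ) (i : ι) :
    |u i| ≤ Real.sqrt (∑ j, u j ^ 2) := by
  rw [← Real.sqrt_sq_eq_abs]
  exact Real.sqrt_le_sqrt (single_le_sum (fun j _ => sq_nonneg (u j)) (mem_univ i))

section Softmax

variable {M : ℕ}

lemma softmax_nonneg (θ : Fin M → ℝ) (m : Fin M) : 0 ≤ softmax θ m := by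
  unfold softmax
  positivity

lemma sum_softmax [NeZero M] (θ : Fin M → ℝ) : ∑ m, softmax θ m = 1 := by
  unfold softmax
  rw [← sum_div, div_self (sum_pos (fun m _ => Real.exp_pos (θ m)) univ_nonempty).ne']

noncomputable def softmaxDeriv (θ u : Fin M → ℝ) (m : Fin M) : ℝ :=
  softmax θ m * (u m - ∑ m', softmax θ m' * u m')

lemma hasDerivAt_softmax_add_smul (θ u : Fin M → ℝ) (m : Fin M) :
    HasDerivAt (fun α : ℝ => softmax (θ + α • u) m) (softmaxDeriv θ u m) 0 := by
  have hexp (k : Fin M) : HasDerivAt (fun α : ℝ => Real.exp (θ k + α * u k))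
      (Real.exp (θ k) * u k) 0 := by
    simpa using (((hasDerivAt_id (0 : ℝ)).mul_const (u k)).const_add (θ k)).exp
  have hZ : ∑ k, Real.exp (θ k) ≠ 0 :=
    (sum_pos (fun k _ => Real.exp_pos (θ k)) ⟨m, mem_univ m⟩).ne'
  have h := (hexp m).fun_div (HasDerivAt.fun_sum fun k _ => hexp k) (by simpa using hZ)
  have hmean : ∑ k, softmax θ k * u k = (∑ k, Real.exp (θ k) * u k) / ∑ k, Real.exp (θ k) := by
    rw [sum_div]
    exact sum_congr rfl fun k _ => by rw [softmax, div_mul_eq_mul_div]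
  have hfun : (fun α : ℝ => softmax (θ + α • u) m) =
      fun α => Real.exp (θ m + α * u m) / ∑ k, Real.exp (θ k + α * u k) := by
    funext α
    simp [softmax]
  rw [hfun]
  refine h.congr_deriv ?_
  rw [softmaxDeriv, hmean, softmax]
  simp only [zero_mul, add_zero]
  field_simp

lemma sum_abs_softmaxDeriv_le (θ u : Fin M → ℝ) :
    ∑ m, |softmaxDeriv θ u m| ≤ 2 * Real.sqrt (∑ m, u m ^ 2) := by
  rcases Nat.eq_zero_or_pos M with rfl | hM
  · simp
  have : NeZero M := ⟨hM.ne'⟩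
  set B := Real.sqrt (∑ m, u m ^ 2)
  have hmean : |∑ m, softmax θ m * u m| ≤ B :=
    abs_sum_mul_le_of_stochastic (softmax_nonneg θ) (sum_softmax θ) (abs_le_sqrt_sum_sq u)
  have hdev (m : Fin M) : |u m - ∑ m', softmax θ m' * u m'| ≤ 2 * B := by
    linarith [abs_sub (u m) (∑ m', softmax θ m' * u m'), abs_le_sqrt_sum_sq u m]
  simp only [softmaxDeriv, abs_mul, abs_of_nonneg (softmax_nonneg θ _)]
  exact (le_abs_self _).trans <| abs_sum_mul_le_of_stochastic (softmax_nonneg θ) (sum_softmax θ)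
    fun m => (abs_abs _).trans_le (hdev m)

end Softmax

theorem stmt_19_general {S A M : ℕ}
    (K : Fin M → Fin S → Fin A → ℝ)
    (hK : ∀ m s, (∀ a, 0 ≤ K m s a) ∧ ∑ a, K m s a = 1)
    (Pker : Fin S → Fin A → Fin S → ℝ)
    (hPker : ∀ s a, (∀ s', 0 ≤ Pker s a s') ∧ ∑ s', Pker s a s' = 1)
    (θ u : Fin M → ℝ)
    (x : Fin S → ℝ) :
    ‖deriv (fun α : ℝ => (fun s : Fin S =>
        ∑ s', (∑ a, (∑ m, softmax (θ + α • u) m * K m s a) * Pker s a s') * x s')) 0‖ ≤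
      2 * Real.sqrt (∑ m, u m ^ 2) * ‖x‖ := by
  set dπ : Fin S → Fin A → ℝ := fun s a => ∑ m, softmaxDeriv θ u m * K m s a
  have hπ (s : Fin S) (a : Fin A) :
      HasDerivAt (fun α : ℝ => ∑ m, softmax (θ + α • u) m * K m s a) (dπ s a) 0 :=
    HasDerivAt.fun_sum fun m _ => (hasDerivAt_softmax_add_smul θ u m).mul_const _
  have hP : HasDerivAt (fun α : ℝ => (fun s : Fin S =>
      ∑ s', (∑ a, (∑ m, softmax (θ + α • u) m * K m s a) * Pker s a s') * x s'))
      (fun s => ∑ a, dπ s a * ∑ s', Pker s a s' * x s') 0 := by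
    refine hasDerivAt_pi.mpr fun s => ?_
    convert HasDerivAt.fun_sum fun s' _ =>
      (HasDerivAt.fun_sum fun a _ => (hπ s a).mul_const (Pker s a s')).mul_const (x s') using 1
    simp only [sum_mul, mul_sum, mul_assoc]
    exact sum_comm
  rw [hP.deriv]
  refine (pi_norm_le_iff_of_nonneg (by positivity)).mpr fun s => ?_
  have hx (s' : Fin S) : |x s'| ≤ ‖x‖ := by simpa using norm_le_pi_norm x s'
  have hPx (a : Fin A) : |∑ s', Pker s a s' * x s'| ≤ ‖x‖ :=
    abs_sum_mul_le_of_stochastic (hPker s a).1 (hPker s a).2 hx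
  have hdπ : ∑ a, |dπ s a| ≤ 2 * Real.sqrt (∑ m, u m ^ 2) :=
    (sum_abs_sum_mul_le_of_stochastic (fun m => K m s) (fun m => hK m s) _).trans
      (sum_abs_softmaxDeriv_le θ u)
  rw [Real.norm_eq_abs]
  exact (abs_sum_mul_le_sum_abs_mul hPx).trans (mul_le_mul_of_nonneg_right hdπ (norm_nonneg x))

theorem stmt_19 {S A M : ℕ}
    (K : Fin M → Fin S → Fin A → ℝ)
    (hK : ∀ m s, (∀ a, 0 ≤ K m s a) ∧ ∑ a, K m s a = 1)
    (Pker : Fin S → Fin A → Fin S → ℝ)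
    (hPker : ∀ s a, (∀ s', 0 ≤ Pker s a s') ∧ ∑ s', Pker s a s' = 1)
    (θ u : Fin M → ℝ) (hu : Real.sqrt (∑ m, u m ^ 2) = 1)
    (x : Fin S → ℝ) :
    ‖deriv (fun α : ℝ => (fun s : Fin S =>
        ∑ s', (∑ a, (∑ m, softmax (θ + α • u) m * K m s a) * Pker s a s') * x s')) 0‖ ≤
      2 * Real.sqrt (∑ m, u m ^ 2) * ‖x‖ :=
  stmt_19_general K hK Pker hPker θ u x
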